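/- arXiv:2204.00318 — 2 statements merged into one kernel-verified Lean document; each statement's English description precedes it below -/
import Mathlib

section
/- Let f : ℝ^{d_x} → ℝ^{d_x} be C¹, h : ℝ^{d_x} → ℝ^{d_y} continuous, D a d_z × d_z complex matrix, F a d_z × d_y complex matrix, and X ⊂ ℝ^{d_x}. Let T : ℝ^{d_x} → ℂ^{d_z} be C¹ and satisfy the partial differential equation (∂T/∂x)(x) f(x) = D T(x) + F h(x) for all x ∈ X. Let x : [0,∞) → ℝ^{d_x} solve ẋ(t) = f(x(t)) with x(t) ∈ X for all t ≥ 0, and let z : [0,∞) → ℂ^{d_z} solve ż(t) = D z(t) + F h(x(t)). Then the error e(t) = z(t) − T(x(t)) satisfies ė(t) = D e(t) for all t ≥ 0, and hence e(t) = e^{tD} e(0). -/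
/-- Matrix acting on a Euclidean vector. -/
noncomputable def matVec {m n : ℕ} (A : Matrix (Fin m) (Fin n) ℂ) (v : EuclideanSpace ℂ (Fin n)) :
    EuclideanSpace ℂ (Fin m) := Matrix.toEuclideanLin A v

/-- Complexification of a real Euclidean vector. -/
def cVec {n : ℕ} (v : EuclideanSpace ℝ (Fin n)) : EuclideanSpace ℂ (Fin n) :=
  WithLp.toLp 2 (fun i => (v i : ℂ))

open NormedSpace in
lemma myCLM_exp {n : ℕ} (M : Matrix (Fin n) (Fin n) ℂ) :
    Matrix.toEuclideanCLM (𝕜 := ℂ) (exp M) = exp (Matrix.toEuclideanCLM (𝕜 := ℂ) M) := by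
  letI := Matrix.instL2OpMetricSpace (m := Fin n) (n := Fin n) (𝕜 := ℂ)
  letI := Matrix.instL2OpNormedAddCommGroup (m := Fin n) (n := Fin n) (𝕜 := ℂ)
  letI := Matrix.instL2OpNormedSpace (m := Fin n) (n := Fin n) (𝕜 := ℂ)
  letI := Matrix.instL2OpNormedRing (n := Fin n) (𝕜 := ℂ)
  letI := Matrix.instL2OpNormedAlgebra (n := Fin n) (𝕜 := ℂ)
  letI : NormedAlgebra ℚ (Matrix (Fin n) (Fin n) ℂ) := .restrictScalars ℚ ℂ _
  have hcont : Continuous (fun M : Matrix (Fin n) (Fin n) ℂ =>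
      Matrix.toEuclideanCLM (𝕜 := ℂ) M) :=
    (AddMonoidHomClass.isometry_of_norm _ (fun _ => rfl)).continuous
  exact map_exp (Matrix.toEuclideanCLM (𝕜 := ℂ)) hcont M

set_option synthInstance.maxHeartbeats 1000000
set_option maxHeartbeats 2000000

/-- along trajectories staying in `X`, the KKL error `e(t) = z(t) − T(x(t))`
satisfies `ė = D e`, hence `e(t) = e^{tD} e(0)`. -/
theorem stmt6 {dx dy dz : ℕ}
    (f : EuclideanSpace ℝ (Fin dx) → EuclideanSpace ℝ (Fin dx)) (hf : ContDiff ℝ 1 f)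
    (h : EuclideanSpace ℝ (Fin dx) → EuclideanSpace ℝ (Fin dy)) (hh : Continuous h)
    (D : Matrix (Fin dz) (Fin dz) ℂ) (F : Matrix (Fin dz) (Fin dy) ℂ)
    (X : Set (EuclideanSpace ℝ (Fin dx)))
    (T : EuclideanSpace ℝ (Fin dx) → EuclideanSpace ℂ (Fin dz)) (hT : ContDiff ℝ 1 T)
    (hpde : ∀ x ∈ X, fderiv ℝ T x (f x) = matVec D (T x) + matVec F (cVec (h x)))
    (x : ℝ → EuclideanSpace ℝ (Fin dx))
    (hx : ∀ t ∈ Set.Ici (0:ℝ), HasDerivAt x (f (x t)) t)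
    (hxX : ∀ t ∈ Set.Ici (0:ℝ), x t ∈ X)
    (z : ℝ → EuclideanSpace ℂ (Fin dz))
    (hz : ∀ t ∈ Set.Ici (0:ℝ), HasDerivAt z (matVec D (z t) + matVec F (cVec (h (x t)))) t) :
    (∀ t ∈ Set.Ici (0:ℝ),
        HasDerivAt (fun s => z s - T (x s)) (matVec D (z t - T (x t))) t) ∧
    (∀ t ∈ Set.Ici (0:ℝ),
        z t - T (x t) = matVec (NormedSpace.exp (t • D)) (z 0 - T (x 0))) := by
  have hAv : ∀ v : EuclideanSpace ℂ (Fin dz),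
      matVec D v = Matrix.toEuclideanCLM (𝕜 := ℂ) D v := fun v => rfl
  set A : EuclideanSpace ℂ (Fin dz) →L[ℂ] EuclideanSpace ℂ (Fin dz) :=
    Matrix.toEuclideanCLM (𝕜 := ℂ) D with hA
  -- Part 1
  have part1 : ∀ t ∈ Set.Ici (0:ℝ),
      HasDerivAt (fun s => z s - T (x s)) (A (z t - T (x t))) t := by
    intro t ht
    have hT' : HasFDerivAt T (fderiv ℝ T (x t)) (x t) :=
      ((hT.differentiable one_ne_zero) (x t)).hasFDerivAt
    have h1 : HasDerivAt (fun s => T (x s)) (fderiv ℝ T (x t) (f (x t))) t :=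
      hT'.comp_hasDerivAt t (hx t ht)
    have h2 := (hz t ht).sub h1
    rw [hpde _ (hxX t ht)] at h2
    have heq : A (z t - T (x t)) = (matVec D (z t) + matVec F (cVec (h (x t)))) -
        (matVec D (T (x t)) + matVec F (cVec (h (x t)))) := by
      simp only [map_sub, hAv]
      abel
    rw [heq]
    exact h2
  have part1' : ∀ t ∈ Set.Ici (0:ℝ),
      HasDerivAt (fun s => z s - T (x s)) (matVec D (z t - T (x t))) t := by
    intro t ht
    rw [hAv]
    exact part1 t ht
  refine ⟨part1', ?_⟩
  -- Part 2
  intro t ht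
  have key : ∀ s : ℝ, HasDerivAt (fun u : ℝ => NormedSpace.exp (u • (-A)))
      (NormedSpace.exp (s • (-A)) * (-A)) s := fun s =>
    hasDerivAt_exp_smul_const (𝕂 := ℝ) (-A) s
  set g : ℝ → EuclideanSpace ℂ (Fin dz) := fun s =>
    ((NormedSpace.exp (s • (-A))).restrictScalars ℝ) (z s - T (x s)) with hg_def
  have hg' : ∀ s ∈ Set.Ici (0:ℝ), HasDerivAt g 0 s := by
    intro s hs
    have hc : HasDerivAt (fun u : ℝ => (NormedSpace.exp (u • (-A))).restrictScalars ℝ)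
        ((NormedSpace.exp (s • (-A)) * (-A)).restrictScalars ℝ) s :=
      (ContinuousLinearMap.restrictScalarsL ℂ (EuclideanSpace ℂ (Fin dz))
        (EuclideanSpace ℂ (Fin dz)) ℝ ℝ).hasFDerivAt.comp_hasDerivAt s (key s)
    have := hc.clm_apply (part1 s hs)
    refine this.congr_deriv ?_
    simp [ContinuousLinearMap.mul_apply]
  have hconst : g t = g 0 := by
    have hcont : ContinuousOn g (Set.Icc 0 t) := fun s hs =>
      ((hg' s hs.1).continuousAt).continuousWithinAt
    exact constant_of_has_deriv_right_zero hcont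
      (fun s hs => ((hg' s hs.1).hasDerivWithinAt)) t (Set.mem_Icc.mpr ⟨ht, le_rfl⟩)
  have hz0 : ((0:ℝ) • (-A)) = 0 := by ext v; simp
  have h0 : (NormedSpace.exp (t • (-A))) (z t - T (x t)) = z 0 - T (x 0) := by
    have := hconst
    simp only [hg_def, hz0, NormedSpace.exp_zero] at this
    simpa using this
  have hsn : t • (-A) = -(t • A) := by ext v; simp
  have hc : Commute (t • A) (t • (-A)) := by
    rw [hsn]; exact (Commute.refl (t • A)).neg_right
  have hinv : NormedSpace.exp (t • A) * NormedSpace.exp (t • (-A)) = 1 := by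
    letI : NormedAlgebra ℚ (EuclideanSpace ℂ (Fin dz) →L[ℂ] EuclideanSpace ℂ (Fin dz)) :=
      .restrictScalars ℚ ℂ _
    rw [← NormedSpace.exp_add_of_commute hc, hsn, add_neg_cancel, NormedSpace.exp_zero]
  have he_t : z t - T (x t) = (NormedSpace.exp (t • A)) (z 0 - T (x 0)) := by
    rw [← h0, ← ContinuousLinearMap.mul_apply, hinv, ContinuousLinearMap.one_apply]
  have hsmul : Matrix.toEuclideanCLM (𝕜 := ℂ) (t • D) = t • A := by
    have : (t • D) = ((t : ℂ) • D) := by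
      ext i j
      simp [Matrix.smul_apply, Complex.real_smul]
    rw [this, map_smul, hA]
    ext v
    simp
  have hfinal : matVec (NormedSpace.exp (t • D)) (z 0 - T (x 0))
      = (NormedSpace.exp (t • A)) (z 0 - T (x 0)) := by
    have h1 : matVec (NormedSpace.exp (t • D)) (z 0 - T (x 0))
        = (Matrix.toEuclideanCLM (𝕜 := ℂ) (NormedSpace.exp (t • D))) (z 0 - T (x 0)) := rfl
    rw [h1, myCLM_exp, hsmul]
  rw [he_t, ← hfinal]
end

section
/- Let f : ℝ^{d_x} → ℝ^{d_x} be C¹, h : ℝ^{d_x} → ℝ^{d_y} continuous, D a diagonalizable d_z × d_z complex matrix whose eigenvalues λ₁, …, λ_{d_z} all have strictly negative real part, F a d_z × d_y complex matrix, and X ⊂ ℝ^{d_x}. Let T : ℝ^{d_x} → ℂ^{d_z} be C¹ and satisfy (∂T/∂x)(x) f(x) = D T(x) + F h(x) for all x ∈ X. Let x : [0,∞) → ℝ^{d_x} solve ẋ(t) = f(x(t)) with x(t) ∈ X for all t ≥ 0, and let z : [0,∞) → ℂ^{d_z} solve ż(t) = D z(t) + F h(x(t)). Then there exists M > 0 such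 that ‖z(t) − T(x(t))‖ ≤ M ‖z(0) − T(x(0))‖ e^{−λ_min t} for all t ≥ 0, where λ_min = min{|Re λ₁|, …, |Re λ_{d_z}|}. -/
noncomputable def matCLM {m n : ℕ} (A : Matrix (Fin m) (Fin n) ℂ) :
    EuclideanSpace ℂ (Fin n) →L[ℂ] EuclideanSpace ℂ (Fin m) :=
  LinearMap.toContinuousLinearMap (Matrix.toEuclideanLin A)

lemma matCLM_apply {m n : ℕ} (A : Matrix (Fin m) (Fin n) ℂ) (v) : matCLM A v = matVec A v := rfl

lemma matVec_apply {m n : ℕ} (A : Matrix (Fin m) (Fin n) ℂ) (v : EuclideanSpace ℂ (Fin n)) (i) :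
    matVec A v i = A.mulVec v i := rfl

lemma matVec_mul {m n p : ℕ} (A : Matrix (Fin m) (Fin n) ℂ) (B : Matrix (Fin n) (Fin p) ℂ)
    (v : EuclideanSpace ℂ (Fin p)) : matVec (A * B) v = matVec A (matVec B v) := by
  ext i
  simp only [matVec_apply]
  rw [show (matVec B v : Fin n → ℂ) = B.mulVec v from rfl, Matrix.mulVec_mulVec]

lemma matVec_one {n : ℕ} (v : EuclideanSpace ℂ (Fin n)) : matVec 1 v = v := by
  ext i; simp [matVec_apply]

lemma matVec_diagonal {n : ℕ} (lam : Fin n → ℂ) (v : EuclideanSpace ℂ (Fin n)) (i : Fin n) :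
    matVec (Matrix.diagonal lam) v i = lam i * v i := by
  simp [matVec_apply, Matrix.mulVec_diagonal]

/-- exponential convergence of the KKL observer error with rate
`λ_min = min_i |Re λ_i|`, for a diagonalizable `D` with stable eigenvalues. -/
theorem stmt7 {dx dy dz : ℕ} (hdz : 0 < dz)
    (f : EuclideanSpace ℝ (Fin dx) → EuclideanSpace ℝ (Fin dx)) (hf : ContDiff ℝ 1 f)
    (h : EuclideanSpace ℝ (Fin dx) → EuclideanSpace ℝ (Fin dy)) (hh : Continuous h)
    (D P : Matrix (Fin dz) (Fin dz) ℂ) (hP : IsUnit P)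
    (lam : Fin dz → ℂ)
    (hdiag : D = P * Matrix.diagonal lam * P⁻¹)
    (hneg : ∀ i, (lam i).re < 0)
    (F : Matrix (Fin dz) (Fin dy) ℂ)
    (X : Set (EuclideanSpace ℝ (Fin dx)))
    (T : EuclideanSpace ℝ (Fin dx) → EuclideanSpace ℂ (Fin dz)) (hT : ContDiff ℝ 1 T)
    (hpde : ∀ x ∈ X, fderiv ℝ T x (f x) = matVec D (T x) + matVec F (cVec (h x)))
    (x : ℝ → EuclideanSpace ℝ (Fin dx))
    (hx : ∀ t ∈ Set.Ici (0:ℝ), HasDerivAt x (f (x t)) t)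
    (hxX : ∀ t ∈ Set.Ici (0:ℝ), x t ∈ X)
    (z : ℝ → EuclideanSpace ℂ (Fin dz))
    (hz : ∀ t ∈ Set.Ici (0:ℝ), HasDerivAt z (matVec D (z t) + matVec F (cVec (h (x t)))) t) :
    ∃ M : ℝ, 0 < M ∧ ∀ t : ℝ, 0 ≤ t →
      ‖z t - T (x t)‖ ≤ M * ‖z 0 - T (x 0)‖ * Real.exp (-(⨅ i, |(lam i).re|) * t) := by
  haveI : Nonempty (Fin dz) := ⟨⟨0, hdz⟩⟩
  set lmin : ℝ := ⨅ i, |(lam i).re| with hlmin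
  have hPdet : IsUnit P.det := (Matrix.isUnit_iff_isUnit_det P).1 hP
  set e : ℝ → EuclideanSpace ℂ (Fin dz) := fun t => z t - T (x t) with he
  -- derivative of the error
  have hederiv : ∀ t ∈ Set.Ici (0:ℝ), HasDerivAt e (matVec D (e t)) t := by
    intro t ht
    have hTx : HasDerivAt (fun s => T (x s)) (fderiv ℝ T (x t) (f (x t))) t :=
      (hT.differentiable one_ne_zero (x t)).hasFDerivAt.comp_hasDerivAt t (hx t ht)
    have hsub := (hz t ht).sub hTx
    rw [hpde (x t) (hxX t ht)] at hsub
    have hmap : matVec D (e t) = matVec D (z t) - matVec D (T (x t)) :=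
      (matCLM D).map_sub (z t) (T (x t))
    rw [show matVec D (e t)
        = matVec D (z t) + matVec F (cVec (h (x t)))
          - (matVec D (T (x t)) + matVec F (cVec (h (x t)))) by rw [hmap]; abel]
    exact hsub
  -- diagonalized coordinates
  set u : ℝ → EuclideanSpace ℂ (Fin dz) := fun t => matVec P⁻¹ (e t) with hu
  have hPinvD : P⁻¹ * D = Matrix.diagonal lam * P⁻¹ := by
    rw [hdiag, ← Matrix.mul_assoc, ← Matrix.mul_assoc, Matrix.nonsing_inv_mul P hPdet,
      Matrix.one_mul]
  have huderiv : ∀ t ∈ Set.Ici (0:ℝ), HasDerivAt u (matVec (Matrix.diagonal lam) (u t)) t := by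
    intro t ht
    have hc := ((matCLM P⁻¹).restrictScalars ℝ).hasFDerivAt.comp_hasDerivAt t (hederiv t ht)
    have heq : matCLM P⁻¹ (matVec D (e t)) = matVec (Matrix.diagonal lam) (u t) := by
      rw [matCLM_apply, ← matVec_mul, hPinvD, matVec_mul]
    exact heq ▸ hc
  -- componentwise solution
  have hcomp : ∀ i, ∀ t ∈ Set.Ici (0:ℝ), u t i = Complex.exp (lam i * t) * u 0 i := by
    intro i t ht
    set g : ℝ → ℂ := fun s => Complex.exp (-(lam i) * s) * u s i with hg
    have hgderiv : ∀ s ∈ Set.Ici (0:ℝ), HasDerivWithinAt g 0 (Set.Ici 0) s := by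
      intro s hs
      have h1 : HasDerivAt (fun r : ℝ => ((r : ℂ))) 1 s := by
        exact Complex.ofRealCLM.hasDerivAt (x := s)
      have h2 : HasDerivAt (fun r : ℝ => -(lam i) * (r : ℂ)) (-(lam i)) s := by
        simpa using h1.const_mul (-(lam i))
      have h3 : HasDerivAt (fun r : ℝ => Complex.exp (-(lam i) * r))
          (Complex.exp (-(lam i) * s) * (-(lam i))) s := h2.cexp
      have h4 : HasDerivAt (fun r : ℝ => u r i) (lam i * u s i) s := by
        have := (((EuclideanSpace.proj i : EuclideanSpace ℂ (Fin dz) →L[ℂ] ℂ)).restrictScalars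
          ℝ).hasFDerivAt.comp_hasDerivAt s (huderiv s hs)
        simpa [Function.comp_def, matVec_diagonal] using this
      have := (h3.mul h4)
      have hzero : Complex.exp (-(lam i) * s) * (-(lam i)) * u s i
          + Complex.exp (-(lam i) * s) * (lam i * u s i) = 0 := by ring
      rw [hzero] at this
      exact this.hasDerivWithinAt
    have hconst : g t = g 0 := by
      have hb := Convex.norm_image_sub_le_of_norm_hasFDerivWithin_le (f := g)
        (f' := fun _ => ContinuousLinearMap.smulRight (1 : ℝ →L[ℝ] ℝ) (0:ℂ)) (C := 0)
        (fun s hs => (hgderiv s hs).hasFDerivWithinAt)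
        (fun s _ => by simp) (convex_Ici 0) (Set.self_mem_Ici) ht
      have h5 : ‖g t - g 0‖ ≤ 0 := by simpa using hb
      exact sub_eq_zero.mp (norm_le_zero_iff.mp h5)
    have h0 : g 0 = u 0 i := by simp [hg]
    have hgt : Complex.exp (-(lam i) * t) * u t i = u 0 i := by rw [← h0, ← hconst]
    rw [← hgt, ← mul_assoc, ← Complex.exp_add]
    have hz0 : lam i * (t:ℂ) + -(lam i) * t = 0 := by ring
    rw [hz0, Complex.exp_zero, one_mul]
  -- norm bounds for components
  have hlminle : ∀ i, (lam i).re ≤ -lmin := by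
    intro i
    have h1 : lmin ≤ |(lam i).re| := ciInf_le (Finite.bddBelow_range _) i
    have h2 : |(lam i).re| = -((lam i).re) := abs_of_neg (hneg i)
    linarith
  have hcompnorm : ∀ i, ∀ t ∈ Set.Ici (0:ℝ),
      ‖u t i‖ ≤ Real.exp (-lmin * t) * ‖u 0 i‖ := by
    intro i t ht
    rw [hcomp i t ht]
    rw [norm_mul, Complex.norm_exp]
    have hre : ((lam i) * (t:ℂ)).re = (lam i).re * t := by simp
    rw [hre]
    exact mul_le_mul_of_nonneg_right
      (Real.exp_le_exp.mpr (mul_le_mul_of_nonneg_right (hlminle i) ht)) (norm_nonneg _)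
  -- norm bound for u
  have hunorm : ∀ t ∈ Set.Ici (0:ℝ), ‖u t‖ ≤ Real.exp (-lmin * t) * ‖u 0‖ := by
    intro t ht
    rw [EuclideanSpace.norm_eq, EuclideanSpace.norm_eq]
    have hsum : ∑ i, ‖u t i‖ ^ 2 ≤ Real.exp (-lmin * t) ^ 2 * ∑ i, ‖u 0 i‖ ^ 2 := by
      rw [Finset.mul_sum]
      apply Finset.sum_le_sum
      intro i _
      rw [← mul_pow]
      exact pow_le_pow_left₀ (norm_nonneg _) (hcompnorm i t ht) 2
    calc √(∑ i, ‖u t i‖ ^ 2) ≤ √(Real.exp (-lmin * t) ^ 2 * ∑ i, ‖u 0 i‖ ^ 2) :=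
          Real.sqrt_le_sqrt hsum
      _ = Real.exp (-lmin * t) * √(∑ i, ‖u 0 i‖ ^ 2) := by
          rw [Real.sqrt_mul (sq_nonneg _), Real.sqrt_sq (Real.exp_nonneg _)]
  -- back to e
  have heu : ∀ t, e t = matVec P (u t) := by
    intro t
    rw [hu, ← matVec_mul, Matrix.mul_nonsing_inv P hPdet, matVec_one]
  refine ⟨‖matCLM P‖ * ‖matCLM P⁻¹‖ + 1, by positivity, fun t ht => ?_⟩
  have h1 : ‖e t‖ ≤ ‖matCLM P‖ * ‖u t‖ := by
    calc ‖e t‖ = ‖matCLM P (u t)‖ := by rw [heu t]; rfl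
      _ ≤ ‖matCLM P‖ * ‖u t‖ := (matCLM P).le_opNorm _
  have h2 : ‖u 0‖ ≤ ‖matCLM P⁻¹‖ * ‖e 0‖ := (matCLM P⁻¹).le_opNorm (e 0)
  have h3 := hunorm t ht
  have hexppos : (0:ℝ) < Real.exp (-lmin * t) := Real.exp_pos _
  have hnP : (0:ℝ) ≤ ‖matCLM (m := dz) (n := dz) P‖ := norm_nonneg _
  have hnPi : (0:ℝ) ≤ ‖matCLM (m := dz) (n := dz) P⁻¹‖ := norm_nonneg _
  have hue : (0:ℝ) ≤ ‖u t‖ := norm_nonneg _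
  have he0 : (0:ℝ) ≤ ‖e 0‖ := norm_nonneg _
  calc ‖z t - T (x t)‖ = ‖e t‖ := rfl
    _ ≤ ‖matCLM P‖ * ‖u t‖ := h1
    _ ≤ ‖matCLM P‖ * (Real.exp (-lmin * t) * ‖u 0‖) := by gcongr
    _ ≤ ‖matCLM P‖ * (Real.exp (-lmin * t) * (‖matCLM P⁻¹‖ * ‖e 0‖)) := by gcongr
    _ ≤ (‖matCLM P‖ * ‖matCLM P⁻¹‖ + 1) * ‖z 0 - T (x 0)‖ * Real.exp (-lmin * t) := by
        have : ‖e 0‖ = ‖z 0 - T (x 0)‖ := rfl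
        rw [this]; nlinarith [Real.exp_pos (-lmin * t), norm_nonneg (z 0 - T (x 0))]
end
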